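/- If C takes values μ_i with probabilities c_i and Z ~ N(0, β²I_d) is independent of C, then the mutual information between C and C+Z satisfies I(C; C+Z) ≥ −Σ_i c_i log(Σ_j c_j exp(−‖μ_i − μ_j‖²/(8β²))). -/

import Mathlib

/-!
Write `g = ∑ cᵢ pᵢ` and `Φ = ∑ⱼ cⱼ √pⱼ`. For any `Sᵢ > 0`, factor `g = pᵢ · Sᵢ · x · y` with
`x = Φ / (Sᵢ √pᵢ)` and `y = g / (√pᵢ Φ)`; applying `log t ≤ t - 1` to `x` and `y` and averaging
over `i` gives the pointwise bound `g log g ≤ ∑ᵢ cᵢ (pᵢ log pᵢ + pᵢ log Sᵢ + Sᵢ⁻¹ √pᵢ Φ) - g`.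
Since `∫ √pᵢ Φ = ∑ⱼ cⱼ BC(pᵢ, pⱼ)` (Bhattacharyya coefficients), choosing `Sᵢ` equal to this
sum and integrating gives `∫ g log g ≤ ∑ᵢ cᵢ ∫ pᵢ log pᵢ + ∑ᵢ cᵢ log Sᵢ`.
For `pᵢ = N(μᵢ, β²I)` one has `∫ pᵢ log pᵢ = -(d/2) log (2πeβ²)`, and by Apollonius' theorem
`√(p_a p_b)` is `exp (-‖a - b‖² / (8β²))` times the Gaussian centred at the midpoint of `a, b`.
-/

open MeasureTheory Real

/-- The density of the Gaussian `N(μ, β²I_d)` on `ℝ^d`. -/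
noncomputable def gaussPdf {d : ℕ} (β : ℝ) (μ t : EuclideanSpace ℝ (Fin d)) : ℝ :=
  (2 * π * β ^ 2) ^ (-(d : ℝ) / 2) * Real.exp (-‖t - μ‖ ^ 2 / (2 * β ^ 2))

/-- Differential entropy `h(g) = −∫ g log g` of a density on `ℝ^d`. -/
noncomputable def diffEnt {d : ℕ} (g : EuclideanSpace ℝ (Fin d) → ℝ) : ℝ :=
  -∫ t, g t * Real.log (g t)

section Elementary

variable {ι : Type*} [Fintype ι]

lemma sum_mul_pos_of_sum_eq_one {c f : ι → ℝ} (hc : ∀ i, 0 ≤ c i) (hsum : ∑ i, c i = 1)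
    (hf : ∀ i, 0 < f i) : 0 < ∑ i, c i * f i := by
  obtain ⟨k, -, hk⟩ := Finset.exists_lt_of_sum_lt (show ∑ _ : ι, (0 : ℝ) < ∑ i, c i by simp [hsum])
  exact Finset.sum_pos' (fun i _ => mul_nonneg (hc i) (hf i).le)
    ⟨k, Finset.mem_univ k, mul_pos hk (hf k)⟩

lemma sum_mul_log_le_mul_log_sum {a : ι → ℝ} (ha : ∀ i, 0 ≤ a i) :
    ∑ i, a i * log (a i) ≤ (∑ i, a i) * log (∑ i, a i) := by
  rw [Finset.sum_mul]
  refine Finset.sum_le_sum fun i _ => ?_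
  rcases (ha i).eq_or_lt with h | h
  · simp [← h]
  · exact mul_le_mul_of_nonneg_left
      (log_le_log h (Finset.single_le_sum (fun j _ => ha j) (Finset.mem_univ i))) h.le

lemma mul_log_le_of_pos {P G Φ S : ℝ} (hP : 0 < P) (hG : 0 < G) (hΦ : 0 < Φ) (hS : 0 < S) :
    P * log G ≤ P * log P + log S * P + S⁻¹ * (√P * Φ) + √P * G / Φ - 2 * P := by
  set x := Φ / (S * √P)
  set y := G / (√P * Φ)
  have hx : 0 < x := by positivity
  have hy : 0 < y := by positivity
  have hG_eq : G = P * S * x * y := by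
    simp only [x, y]
    field_simp
    rw [sq_sqrt hP.le]
  have hlog : log G = log P + log S + log x + log y := by
    rw [hG_eq, log_mul (by positivity) hy.ne', log_mul (by positivity) hx.ne',
      log_mul hP.ne' hS.ne']
  have hPx : P * x = S⁻¹ * (√P * Φ) := by
    simp only [x]; field_simp; rw [sq_sqrt hP.le]
  have hPy : P * y = √P * G / Φ := by
    simp only [y]; field_simp; rw [sq_sqrt hP.le]
  have hlx := mul_le_mul_of_nonneg_left (log_le_sub_one_of_pos hx) hP.le
  have hly := mul_le_mul_of_nonneg_left (log_le_sub_one_of_pos hy) hP.le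
  rw [hlog]
  linear_combination hlx + hly + hPx + hPy

lemma mul_log_sum_le {c P S : ι → ℝ} (hc : ∀ i, 0 ≤ c i) (hsum : ∑ i, c i = 1)
    (hP : ∀ i, 0 < P i) (hS : ∀ i, 0 < S i) :
    (∑ i, c i * P i) * log (∑ i, c i * P i) ≤
      ∑ i, c i * (P i * log (P i) + log (S i) * P i + (S i)⁻¹ * ∑ j, c j * (√(P i) * √(P j)))
        - ∑ i, c i * P i := by
  set G := ∑ i, c i * P i
  set Φ := ∑ j, c j * √(P j)
  have hG : 0 < G := sum_mul_pos_of_sum_eq_one hc hsum hP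
  have hΦ : 0 < Φ := sum_mul_pos_of_sum_eq_one hc hsum fun i => sqrt_pos.mpr (hP i)
  have hΦG : ∑ i, c i * (√(P i) * G / Φ) = G := by
    simp_rw [mul_div_assoc, ← mul_assoc, ← Finset.sum_mul]
    exact mul_div_cancel₀ G hΦ.ne'
  have h2G : ∑ i, c i * (2 * P i) = 2 * G := by
    simp only [G, Finset.mul_sum]; ring_nf
  calc G * log G = ∑ i, c i * (P i * log G) := by
        simp only [G, Finset.sum_mul, mul_assoc]
    _ ≤ ∑ i, c i * (P i * log (P i) + log (S i) * P i
          + (S i)⁻¹ * ∑ j, c j * (√(P i) * √(P j)) + √(P i) * G / Φ - 2 * P i) := by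
        refine Finset.sum_le_sum fun i _ => mul_le_mul_of_nonneg_left ?_ (hc i)
        have hΦi : √(P i) * Φ = ∑ j, c j * (√(P i) * √(P j)) := by
          simp only [Φ, Finset.mul_sum, mul_left_comm]
        rw [← hΦi]
        exact mul_log_le_of_pos (hP i) hG hΦ (hS i)
    _ = _ := by
        simp only [mul_sub, mul_add, Finset.sum_sub_distrib, Finset.sum_add_distrib, hΦG, h2G]
        ring

end Elementary

section Bhattacharyya

variable {α : Type*} [MeasurableSpace α] {ν : Measure α}

noncomputable def bhattacharyyaCoeff (ν : Measure α) (p q : α → ℝ) : ℝ :=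
  ∫ x, √(p x) * √(q x) ∂ν

lemma integrable_sqrt_mul_sqrt {p q : α → ℝ} (hp : Integrable p ν) (hq : Integrable q ν) :
    Integrable (fun x => √(p x) * √(q x)) ν := by
  refine ((hp.abs.add hq.abs).div_const 2).mono'
    ((continuous_sqrt.comp_aestronglyMeasurable hp.1).mul
      (continuous_sqrt.comp_aestronglyMeasurable hq.1)) (.of_forall fun x => ?_)
  rw [norm_mul, norm_of_nonneg (sqrt_nonneg _), norm_of_nonneg (sqrt_nonneg _)]
  calc √(p x) * √(q x) ≤ √|p x| * √|q x| := by
        gcongr <;> exact le_abs_self _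
    _ ≤ (|p x| + |q x|) / 2 := by
        nlinarith [sq_nonneg (√|p x| - √|q x|), sq_sqrt (abs_nonneg (p x)),
          sq_sqrt (abs_nonneg (q x))]

lemma bhattacharyyaCoeff_pos [NeZero ν] {p q : α → ℝ} (hp : ∀ x, 0 < p x) (hq : ∀ x, 0 < q x)
    (hp_int : Integrable p ν) (hq_int : Integrable q ν) : 0 < bhattacharyyaCoeff ν p q := by
  have hpos : ∀ x, 0 < √(p x) * √(q x) := fun x => by
    have := hp x; have := hq x; positivity
  rw [bhattacharyyaCoeff, integral_pos_iff_support_of_nonneg (fun x => (hpos x).le)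
    (integrable_sqrt_mul_sqrt hp_int hq_int), Function.support_eq_univ fun x => (hpos x).ne']
  exact Measure.measure_univ_pos.mpr (NeZero.ne ν)

lemma integrable_sum_const_mul {ι : Type*} [Fintype ι] (c : ι → ℝ) {f : ι → α → ℝ}
    (hf : ∀ i, Integrable (f i) ν) : Integrable (fun x => ∑ i, c i * f i x) ν :=
  integrable_finsetSum _ fun i _ => (hf i).const_mul (c i)

lemma integral_sum_const_mul {ι : Type*} [Fintype ι] (c : ι → ℝ) {f : ι → α → ℝ}
    (hf : ∀ i, Integrable (f i) ν) : ∫ x, ∑ i, c i * f i x ∂ν = ∑ i, c i * ∫ x, f i x ∂ν := by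
  rw [integral_finsetSum _ fun i _ => (hf i).const_mul (c i)]
  simp only [integral_const_mul]

lemma integrable_mixture_mul_log {ι : Type*} [Fintype ι] {c : ι → ℝ} {p : ι → α → ℝ}
    (hc : ∀ i, 0 ≤ c i) (hsum : ∑ i, c i = 1) (hp : ∀ i x, 0 ≤ p i x)
    (hp_int : ∀ i, Integrable (p i) ν) (hp_log : ∀ i, Integrable (fun x => p i x * log (p i x)) ν) :
    Integrable (fun x => (∑ i, c i * p i x) * log (∑ i, c i * p i x)) ν := by
  have hlower : Integrable (fun x => ∑ i, c i * p i x * log (c i * p i x)) ν := by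
    refine (integrable_finsetSum Finset.univ fun i _ => ((hp_log i).const_mul (c i)).fun_add
      ((hp_int i).const_mul (c i * log (c i)))).congr (.of_forall fun x => ?_)
    refine Finset.sum_congr rfl fun i _ => ?_
    have := negMulLog_mul (c i) (p i x)
    simp only [negMulLog] at this
    linarith
  refine integrable_of_le_of_le
    (continuous_mul_log.comp_aestronglyMeasurable (integrable_sum_const_mul c hp_int).1)
    (.of_forall fun x => sum_mul_log_le_mul_log_sum fun i => mul_nonneg (hc i) (hp i x))
    (.of_forall fun x => ?_) hlower (integrable_sum_const_mul c hp_log)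
  simpa using convexOn_mul_log.map_sum_le (fun i _ => hc i) hsum fun i _ => hp i x

theorem integral_mixture_mul_log_le {ι : Type*} [Fintype ι] {c : ι → ℝ} {p : ι → α → ℝ}
    (hc : ∀ i, 0 ≤ c i) (hsum : ∑ i, c i = 1) (hp : ∀ i x, 0 < p i x)
    (hp_one : ∀ i, ∫ x, p i x ∂ν = 1) (hp_log : ∀ i, Integrable (fun x => p i x * log (p i x)) ν) :
    ∫ x, (∑ i, c i * p i x) * log (∑ i, c i * p i x) ∂ν ≤
      ∑ i, c i * ∫ x, p i x * log (p i x) ∂ν +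
        ∑ i, c i * log (∑ j, c j * bhattacharyyaCoeff ν (p i) (p j)) := by
  have hp_int i : Integrable (p i) ν := integrable_of_integral_eq_one (hp_one i)
  set g := fun x => ∑ i, c i * p i x
  set S := fun i => ∑ j, c j * bhattacharyyaCoeff ν (p i) (p j)
  have hg_one : ∫ x, g x ∂ν = 1 := by simp [g, integral_sum_const_mul c hp_int, hp_one, hsum]
  have : NeZero ν := ⟨by rintro rfl; simp at hg_one⟩
  have hS i : 0 < S i := sum_mul_pos_of_sum_eq_one hc hsum fun j =>
    bhattacharyyaCoeff_pos (hp i) (hp j) (hp_int i) (hp_int j)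
  have hB_int i j : Integrable (fun x => √(p i x) * √(p j x)) ν :=
    integrable_sqrt_mul_sqrt (hp_int i) (hp_int j)
  set T := fun i x => p i x * log (p i x) + log (S i) * p i x +
    (S i)⁻¹ * ∑ j, c j * (√(p i x) * √(p j x))
  have hT_int i : Integrable (T i) ν :=
    ((hp_log i).fun_add ((hp_int i).const_mul _)).fun_add
      ((integrable_sum_const_mul c (hB_int i)).const_mul _)
  have hT_eq i : ∫ x, T i x ∂ν = ∫ x, p i x * log (p i x) ∂ν + log (S i) + 1 := by
    rw [integral_add ((hp_log i).fun_add ((hp_int i).const_mul _))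
        ((integrable_sum_const_mul c (hB_int i)).const_mul _),
      integral_add (hp_log i) ((hp_int i).const_mul _), integral_const_mul, integral_const_mul,
      integral_sum_const_mul c (hB_int i), hp_one]
    rw [show ∑ j, c j * ∫ x, √(p i x) * √(p j x) ∂ν = S i from rfl, inv_mul_cancel₀ (hS i).ne',
      mul_one]
  set U := fun x => ∑ i, c i * T i x - g x
  have hU_int : Integrable U ν :=
    (integrable_sum_const_mul c hT_int).sub (integrable_sum_const_mul c hp_int)
  have hU_eq : ∫ x, U x ∂ν = ∑ i, c i * ∫ x, p i x * log (p i x) ∂ν + ∑ i, c i * log (S i) := by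
    rw [integral_sub (integrable_sum_const_mul c hT_int) (integrable_sum_const_mul c hp_int),
      hg_one, integral_sum_const_mul c hT_int]
    simp only [hT_eq, mul_add, Finset.sum_add_distrib, mul_one, hsum]
    ring
  calc ∫ x, g x * log (g x) ∂ν
      ≤ ∫ x, U x ∂ν :=
        integral_mono (integrable_mixture_mul_log hc hsum (fun i x => (hp i x).le) hp_int hp_log)
          hU_int fun x => mul_log_sum_le hc hsum (fun i => hp i x) hS
    _ = _ := hU_eq

end Bhattacharyya

section GaussianMoments

lemma integral_Ioi_pow_add_two_mul_exp_neg_mul_sq {b : ℝ} (hb : 0 < b) (k : ℕ) :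
    ∫ y in Set.Ioi (0 : ℝ), y ^ (k + 2) * exp (-b * y ^ 2) =
      (k + 1) / (2 * b) * ∫ y in Set.Ioi (0 : ℝ), y ^ k * exp (-b * y ^ 2) := by
  have hrpow : ∀ m : ℕ, ∫ y in Set.Ioi (0 : ℝ), y ^ m * exp (-b * y ^ 2) =
      b ^ (-((m : ℝ) + 1) / 2) * (1 / 2) * Gamma (((m : ℝ) + 1) / 2) := fun m => by
    rw [← integral_rpow_mul_exp_neg_mul_rpow two_pos (by linarith [m.cast_nonneg (α := ℝ)]) hb]
    refine setIntegral_congr_fun measurableSet_Ioi fun y _ => ?_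
    simp only [rpow_natCast, rpow_two]
  rw [hrpow, hrpow, show ((k + 2 : ℕ) : ℝ) + 1 = (k + 1) + 2 by push_cast; ring,
    add_div _ 2, div_self two_ne_zero, Gamma_add_one (by positivity),
    show -((k : ℝ) + 1 + 2) / 2 = -((k + 1) / 2) + -1 by ring, rpow_add hb, rpow_neg_one,
    show -((k : ℝ) + 1) / 2 = -((k + 1) / 2) by ring]
  field_simp

theorem integral_norm_sq_mul_exp_neg_mul_sq_norm {E : Type*} [NormedAddCommGroup E]
    [NormedSpace ℝ E] [FiniteDimensional ℝ E] [MeasurableSpace E] [BorelSpace E]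
    (μ : Measure E) [μ.IsAddHaarMeasure] {b : ℝ} (hb : 0 < b) :
    ∫ x, ‖x‖ ^ 2 * exp (-b * ‖x‖ ^ 2) ∂μ =
      Module.finrank ℝ E / (2 * b) * ∫ x, exp (-b * ‖x‖ ^ 2) ∂μ := by
  rcases subsingleton_or_nontrivial E with hE | hE
  · simp [norm_of_subsingleton, Module.finrank_zero_of_subsingleton]
  obtain ⟨k, hk⟩ := Nat.exists_eq_succ_of_ne_zero (Module.finrank_pos (R := ℝ) (M := E)).ne'
  rw [integral_fun_norm_addHaar μ fun y => y ^ 2 * exp (-b * y ^ 2),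
    integral_fun_norm_addHaar μ fun y => exp (-b * y ^ 2)]
  simp only [hk, smul_eq_mul, nsmul_eq_mul, ← mul_assoc, ← pow_add]
  rw [integral_Ioi_pow_add_two_mul_exp_neg_mul_sq hb]
  push_cast
  ring

end GaussianMoments

section GaussPdf

variable {d : ℕ} {β : ℝ}

lemma gaussPdf_pos (hβ : β ≠ 0) (μ t : EuclideanSpace ℝ (Fin d)) : 0 < gaussPdf β μ t := by
  unfold gaussPdf
  positivity

lemma gaussPdf_eq_gaussPdf_zero (β : ℝ) (μ : EuclideanSpace ℝ (Fin d)) :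
    gaussPdf β μ = fun t => gaussPdf β 0 (t - μ) := by
  ext t
  simp [gaussPdf]

lemma gaussPdf_zero_apply (β : ℝ) (t : EuclideanSpace ℝ (Fin d)) :
    gaussPdf β 0 t = (2 * π * β ^ 2) ^ (-(d : ℝ) / 2) * exp (-(2 * β ^ 2)⁻¹ * ‖t‖ ^ 2) := by
  simp only [gaussPdf, sub_zero]
  ring_nf

lemma integral_gaussPdf (hβ : β ≠ 0) (μ : EuclideanSpace ℝ (Fin d)) :
    ∫ t, gaussPdf β μ t = 1 := by
  have : 0 < 2 * π * β ^ 2 := by positivity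
  rw [gaussPdf_eq_gaussPdf_zero, integral_sub_right_eq_self (gaussPdf β 0) μ]
  simp only [gaussPdf_zero_apply]
  rw [integral_const_mul, GaussianFourier.integral_rexp_neg_mul_sq_norm (by positivity),
    finrank_euclideanSpace_fin, show π / (2 * β ^ 2)⁻¹ = 2 * π * β ^ 2 by field_simp, neg_div,
    rpow_neg this.le, inv_mul_cancel₀ (by positivity)]

lemma integrable_gaussPdf (hβ : β ≠ 0) (μ : EuclideanSpace ℝ (Fin d)) :
    Integrable (gaussPdf β μ) :=
  integrable_of_integral_eq_one (integral_gaussPdf hβ μ)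

lemma integral_norm_sub_sq_mul_gaussPdf (hβ : β ≠ 0) (μ : EuclideanSpace ℝ (Fin d)) :
    ∫ t, ‖t - μ‖ ^ 2 * gaussPdf β μ t = d * β ^ 2 := by
  have hb : 0 < (2 * β ^ 2)⁻¹ := by positivity
  rw [gaussPdf_eq_gaussPdf_zero,
    integral_sub_right_eq_self (fun t => ‖t‖ ^ 2 * gaussPdf β 0 t) μ]
  have h1 := integral_gaussPdf hβ (0 : EuclideanSpace ℝ (Fin d))
  simp only [gaussPdf_zero_apply, integral_const_mul] at h1 ⊢
  simp only [mul_left_comm _ ((2 * π * β ^ 2) ^ (-(d : ℝ) / 2)), integral_const_mul,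
    integral_norm_sq_mul_exp_neg_mul_sq_norm volume hb, finrank_euclideanSpace_fin]
  rw [mul_left_comm, h1]
  field_simp

lemma integrable_norm_sub_sq_mul_gaussPdf (hβ : β ≠ 0) (μ : EuclideanSpace ℝ (Fin d)) :
    Integrable (fun t => ‖t - μ‖ ^ 2 * gaussPdf β μ t) := by
  rcases Nat.eq_zero_or_pos d with rfl | hd
  · simp [Subsingleton.elim _ μ]
  · refine Integrable.of_integral_ne_zero ?_
    rw [integral_norm_sub_sq_mul_gaussPdf hβ]
    positivity

lemma log_gaussPdf (hβ : β ≠ 0) (μ t : EuclideanSpace ℝ (Fin d)) :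
    log (gaussPdf β μ t) = -(d / 2) * log (2 * π * β ^ 2) - (2 * β ^ 2)⁻¹ * ‖t - μ‖ ^ 2 := by
  have : 0 < 2 * π * β ^ 2 := by positivity
  rw [gaussPdf, log_mul (by positivity) (exp_pos _).ne', log_rpow this, log_exp]
  ring

lemma gaussPdf_mul_log_gaussPdf (hβ : β ≠ 0) (μ : EuclideanSpace ℝ (Fin d)) :
    (fun t => gaussPdf β μ t * log (gaussPdf β μ t)) = fun t =>
      -(d / 2) * log (2 * π * β ^ 2) * gaussPdf β μ t -
        (2 * β ^ 2)⁻¹ * (‖t - μ‖ ^ 2 * gaussPdf β μ t) := by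
  ext t
  rw [log_gaussPdf hβ]
  ring

lemma integrable_gaussPdf_mul_log (hβ : β ≠ 0) (μ : EuclideanSpace ℝ (Fin d)) :
    Integrable (fun t => gaussPdf β μ t * log (gaussPdf β μ t)) := by
  rw [gaussPdf_mul_log_gaussPdf hβ]
  exact ((integrable_gaussPdf hβ μ).const_mul _).sub
    ((integrable_norm_sub_sq_mul_gaussPdf hβ μ).const_mul _)

lemma integral_gaussPdf_mul_log (hβ : β ≠ 0) (μ : EuclideanSpace ℝ (Fin d)) :
    ∫ t, gaussPdf β μ t * log (gaussPdf β μ t) = -(d / 2) * log (2 * π * exp 1 * β ^ 2) := by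
  have : 0 < 2 * π * β ^ 2 := by positivity
  rw [gaussPdf_mul_log_gaussPdf hβ, integral_sub ((integrable_gaussPdf hβ μ).const_mul _)
    ((integrable_norm_sub_sq_mul_gaussPdf hβ μ).const_mul _), integral_const_mul,
    integral_const_mul, integral_gaussPdf hβ, integral_norm_sub_sq_mul_gaussPdf hβ,
    show 2 * π * exp 1 * β ^ 2 = 2 * π * β ^ 2 * exp 1 by ring,
    log_mul this.ne' (exp_pos 1).ne', log_exp]
  field_simp
  ring

lemma sqrt_gaussPdf_mul_sqrt_gaussPdf (hβ : β ≠ 0) (a b t : EuclideanSpace ℝ (Fin d)) :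
    √(gaussPdf β a t) * √(gaussPdf β b t) =
      exp (-‖a - b‖ ^ 2 / (8 * β ^ 2)) * gaussPdf β (midpoint ℝ a b) t := by
  have h := EuclideanGeometry.dist_sq_add_dist_sq_eq_two_mul_dist_midpoint_sq_add_half_dist_sq
    t a b
  simp only [dist_eq_norm] at h
  have hm := gaussPdf_pos hβ (midpoint ℝ a b) t
  suffices gaussPdf β a t * gaussPdf β b t =
      (exp (-‖a - b‖ ^ 2 / (8 * β ^ 2)) * gaussPdf β (midpoint ℝ a b) t) ^ 2 by
    rw [← sqrt_mul (gaussPdf_pos hβ a t).le, this, sqrt_sq (by positivity)]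
  have hexp : -‖t - a‖ ^ 2 / (2 * β ^ 2) + -‖t - b‖ ^ 2 / (2 * β ^ 2) =
      (-‖a - b‖ ^ 2 / (8 * β ^ 2) + -‖t - midpoint ℝ a b‖ ^ 2 / (2 * β ^ 2)) +
        (-‖a - b‖ ^ 2 / (8 * β ^ 2) + -‖t - midpoint ℝ a b‖ ^ 2 / (2 * β ^ 2)) := by
    field_simp
    linarith
  simp only [gaussPdf]
  rw [mul_mul_mul_comm, ← exp_add, hexp, exp_add, exp_add]
  ring

lemma bhattacharyyaCoeff_gaussPdf (hβ : β ≠ 0) (a b : EuclideanSpace ℝ (Fin d)) :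
    bhattacharyyaCoeff volume (gaussPdf β a) (gaussPdf β b) = exp (-‖a - b‖ ^ 2 / (8 * β ^ 2)) := by
  simp only [bhattacharyyaCoeff, sqrt_gaussPdf_mul_sqrt_gaussPdf hβ, integral_const_mul,
    integral_gaussPdf hβ, mul_one]

end GaussPdf

/-- Kolchinsky–Tracy lower bound: with `C` taking value `μ_i` w.p. `c_i` and
`Z ~ N(0, β²I_d)` independent, `I(C; C+Z) = h(g) − (d/2)log(2πeβ²)` satisfies
`I(C; C+Z) ≥ −Σ_i c_i log(Σ_j c_j exp(−‖μ_i − μ_j‖²/(8β²)))`. -/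
theorem mutualInfo_ge_bhattacharyya {d n : ℕ} (β : ℝ) (hβ : 0 < β)
    (c : Fin n → ℝ) (hc : ∀ i, 0 ≤ c i) (hsum : ∑ i, c i = 1)
    (μ : Fin n → EuclideanSpace ℝ (Fin d)) :
    diffEnt (fun t => ∑ i, c i * gaussPdf β (μ i) t) -
        (d : ℝ) / 2 * Real.log (2 * π * Real.exp 1 * β ^ 2) ≥
      -∑ i, c i * Real.log (∑ j, c j * Real.exp (-‖μ i - μ j‖ ^ 2 / (8 * β ^ 2))) := by
  have h := integral_mixture_mul_log_le (ν := volume) hc hsum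
    (fun i => gaussPdf_pos hβ.ne' (μ i)) (fun i => integral_gaussPdf hβ.ne' (μ i))
    (fun i => integrable_gaussPdf_mul_log hβ.ne' (μ i))
  simp only [integral_gaussPdf_mul_log hβ.ne', bhattacharyyaCoeff_gaussPdf hβ.ne',
    ← Finset.sum_mul, hsum, one_mul] at h
  rw [diffEnt, ge_iff_le]
  linarith
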